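/- The homogeneous polynomial F of degree 10 defined by F(x,y,1) = 9(x-1)y^9 - 3(6x^4+8x^3-3x^2-6x+1)y^6 + (9x^7+24x^6+13x^5-8x^4-11x^3-x^2+2x-1)y^3 - (x+2)x^3(x^2-1)^3 vanishes identically along the parametrization x(t) = (t^3+2)(t^6+3t^3+3), y(t) = t(t^3+1)(t^3+2)(t^3+3), z(t) = t^9+3t^6-3; that is, F(x(t), y(t), z(t)) = 0 for all complex t. -/
import Mathlib


open MvPolynomial

private lemma eval_smul_hom (F : MvPolynomial (Fin 3) ℂ) {n : ℕ} (h : F.IsHomogeneous n)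
    (c : ℂ) (v : Fin 3 → ℂ) : eval (fun i => c * v i) F = c ^ n * eval v F := by
  rw [eval_eq', eval_eq', Finset.mul_sum]
  apply Finset.sum_congr rfl
  intro d hd
  have hdeg : ∑ i, d i = n := by
    have h2 := h (mem_support_iff.mp hd)
    rw [← h2]
    simp [Finsupp.weight_apply, Finsupp.sum_fintype]
  rw [← hdeg]
  simp_rw [mul_pow]
  rw [Finset.prod_mul_distrib, Finset.prod_pow_eq_pow_sum]
  ring

private lemma eval_aeval_poly (F : MvPolynomial (Fin 3) ℂ) (v : Fin 3 → Polynomial ℂ) (t : ℂ) :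
    Polynomial.eval t (aeval v F) = eval (fun i => (v i).eval t) F := by
  have h := eval₂_comp_left (Polynomial.evalRingHom t) (algebraMap ℂ (Polynomial ℂ)) v F
  simp only [Polynomial.coe_evalRingHom] at h
  rw [aeval_def, h, eval]
  congr 1
  ext a; simp [Polynomial.algebraMap_eq]

private lemma homogenize_id : ∀ a b z : ℂ,
    z^10 * (9 * (a - 1) * b^9
      - 3 * (6*a^4 + 8*a^3 - 3*a^2 - 6*a + 1) * b^6
      + (9*a^7 + 24*a^6 + 13*a^5 - 8*a^4 - 11*a^3 - a^2 + 2*a - 1) * b^3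
      - (a + 2) * a^3 * (a^2 - 1)^3) =
    9*((z*a) - z)*(z*b)^9
      - 3*(6*(z*a)^4 + 8*(z*a)^3*z - 3*(z*a)^2*z^2 - 6*(z*a)*z^3 + z^4)*(z*b)^6
      + (9*(z*a)^7 + 24*(z*a)^6*z + 13*(z*a)^5*z^2 - 8*(z*a)^4*z^3 - 11*(z*a)^3*z^4
          - (z*a)^2*z^5 + 2*(z*a)*z^6 - z^7)*(z*b)^3
      - ((z*a) + 2*z)*(z*a)^3*((z*a)^2 - z^2)^3 := by
  intro a b z
  ring

set_option maxHeartbeats 2000000 in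
private lemma param_id : ∀ t : ℂ,
    (fun x y z : ℂ =>
      9*(x - z)*y^9 - 3*(6*x^4 + 8*x^3*z - 3*x^2*z^2 - 6*x*z^3 + z^4)*y^6
        + (9*x^7 + 24*x^6*z + 13*x^5*z^2 - 8*x^4*z^3 - 11*x^3*z^4 - x^2*z^5 + 2*x*z^6 - z^7)*y^3
        - (x + 2*z)*x^3*(x^2 - z^2)^3)
      ((t^3 + 2) * (t^6 + 3*t^3 + 3)) (t * (t^3 + 1) * (t^3 + 2) * (t^3 + 3))
      (t^9 + 3*t^6 - 3) = 0 := by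
  intro t
  simp only
  ring

/-- If F is a homogeneous polynomial of degree 10 in three variables whose
dehomogenization at z = 1 is
9(x-1)y^9 - 3(6x^4+8x^3-3x^2-6x+1)y^6
  + (9x^7+24x^6+13x^5-8x^4-11x^3-x^2+2x-1)y^3 - (x+2)x^3(x^2-1)^3,
then F vanishes identically along the parametrization
x(t) = (t^3+2)(t^6+3t^3+3), y(t) = t(t^3+1)(t^3+2)(t^3+3), z(t) = t^9+3t^6-3. -/
theorem stmt_0 (F : MvPolynomial (Fin 3) ℂ)
    (hhom : F.IsHomogeneous 10)
    (hdeh : ∀ x y : ℂ, eval ![x, y, 1] F =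
      9 * (x - 1) * y^9
      - 3 * (6*x^4 + 8*x^3 - 3*x^2 - 6*x + 1) * y^6
      + (9*x^7 + 24*x^6 + 13*x^5 - 8*x^4 - 11*x^3 - x^2 + 2*x - 1) * y^3
      - (x + 2) * x^3 * (x^2 - 1)^3) :
    ∀ t : ℂ,
      eval ![(t^3 + 2) * (t^6 + 3*t^3 + 3),
             t * (t^3 + 1) * (t^3 + 2) * (t^3 + 3),
             t^9 + 3*t^6 - 3] F = 0 := by
  have key : ∀ t : ℂ, (t^9 + 3*t^6 - 3) ≠ 0 →
      eval ![(t^3 + 2) * (t^6 + 3*t^3 + 3),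
             t * (t^3 + 1) * (t^3 + 2) * (t^3 + 3),
             t^9 + 3*t^6 - 3] F = 0 := by
    intro t hz
    set x : ℂ := (t^3 + 2) * (t^6 + 3*t^3 + 3) with hx
    set y : ℂ := t * (t^3 + 1) * (t^3 + 2) * (t^3 + 3) with hy
    set z : ℂ := t^9 + 3*t^6 - 3 with hzd
    have hax : z * (x/z) = x := by field_simp
    have hby : z * (y/z) = y := by field_simp
    have hv : ![x, y, z] = fun i => z * (![x/z, y/z, 1] i) := by
      funext i
      fin_cases i
      · simpa using hax.symm
      · simpa using hby.symm
      · simp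
    rw [hv, eval_smul_hom F hhom, hdeh, homogenize_id, hax, hby]
    have := param_id t
    simp only at this
    rw [hx, hy, hzd]
    convert this using 2
  set px : Polynomial ℂ := (Polynomial.X^3 + 2) * (Polynomial.X^6 + 3*Polynomial.X^3 + 3) with hpx
  set py : Polynomial ℂ :=
    Polynomial.X * (Polynomial.X^3 + 1) * (Polynomial.X^3 + 2) * (Polynomial.X^3 + 3) with hpy
  set pz : Polynomial ℂ := Polynomial.X^9 + 3*Polynomial.X^6 - 3 with hpz
  set g : Polynomial ℂ := aeval ![px, py, pz] F with hgdef
  have hg : ∀ t : ℂ, g.eval t =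
      eval ![(t^3 + 2) * (t^6 + 3*t^3 + 3),
             t * (t^3 + 1) * (t^3 + 2) * (t^3 + 3),
             t^9 + 3*t^6 - 3] F := by
    intro t
    rw [hgdef, eval_aeval_poly]
    have hvv : (fun i => Polynomial.eval t (![px, py, pz] i)) =
        ![(t^3 + 2) * (t^6 + 3*t^3 + 3),
          t * (t^3 + 1) * (t^3 + 2) * (t^3 + 3),
          t^9 + 3*t^6 - 3] := by
      funext i
      fin_cases i <;> simp [hpx, hpy, hpz]
    rw [hvv]
  have hpz_ne : pz ≠ 0 := by
    intro h
    have h0 := congrArg (Polynomial.eval 0) h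
    simp [hpz] at h0
  have hginf : {t : ℂ | g.IsRoot t}.Infinite := by
    apply Set.Infinite.mono (s := {t : ℂ | ¬ pz.IsRoot t})
    · intro t ht
      simp only [Set.mem_setOf_eq, Polynomial.IsRoot] at ht ⊢
      rw [hg t]
      apply key
      have hev : pz.eval t = t^9 + 3*t^6 - 3 := by simp [hpz]
      rw [hev] at ht
      exact ht
    · have hfin := Polynomial.finite_setOf_isRoot hpz_ne
      have := hfin.infinite_compl
      simpa [Set.compl_setOf] using this
  have hg0 : g = 0 := Polynomial.eq_zero_of_infinite_isRoot g hginf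
  intro t
  rw [← hg t, hg0]
  simp
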